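/- arXiv:2202.03913 — 3 statements merged into one kernel-verified Lean document; each statement's English description precedes it below -/
import Mathlib

section
/- Let n ≥ 1. The ℂ-algebra homomorphism φ : ℂ[u, v, w] → ℂ[x, y] determined by φ(u) = xⁿ, φ(v) = yⁿ, φ(w) = x·y has kernel equal to the principal ideal generated by u·v − wⁿ. Consequently φ induces an isomorphism of ℂ-algebras ℂ[u,v,w]/(uv − wⁿ) ≅ im(φ), the subalgebra of ℂ[x,y] generated by xⁿ, yⁿ, and xy. -/
open MvPolynomial

/-- The map `ℂ[u,v,w] → ℂ[x,y]`, `u ↦ xⁿ`, `v ↦ yⁿ`, `w ↦ xy`. -/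
noncomputable def kleinianMap (n : ℕ) : MvPolynomial (Fin 3) ℂ →ₐ[ℂ] MvPolynomial (Fin 2) ℂ :=
  aeval ![(X 0 : MvPolynomial (Fin 2) ℂ) ^ n, (X 1 : MvPolynomial (Fin 2) ℂ) ^ n,
    (X 0 : MvPolynomial (Fin 2) ℂ) * X 1]

/-!
Since `wⁿ - uv` is monic in `w`, division with remainder shows that every polynomial is congruent
modulo `(uv - wⁿ)` to one of `w`-degree `< n`. On those the map is injective: it sends `uᵃvᵇwᶜ` to
`x^(na+c) y^(nb+c)`, and for `c < n` the exponents determine `(a, b, c)` (division by `n` with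
remainder), so distinct monomials go to distinct monomials.
-/

namespace MvPolynomial

variable {R σ τ : Type*} [CommRing R]

theorem coeff_apply_eq_of_map_monomial {F : Type*} [FunLike F (MvPolynomial σ R) (MvPolynomial τ R)]
    [AddMonoidHomClass F (MvPolynomial σ R) (MvPolynomial τ R)] {f : F}
    {φ : (σ →₀ ℕ) → (τ →₀ ℕ)} (hf : ∀ m a, f (monomial m a) = monomial (φ m) a)
    {S : Set (σ →₀ ℕ)} (hφ : S.InjOn φ) {p : MvPolynomial σ R} (hp : ↑p.support ⊆ S)
    {d : σ →₀ ℕ} (hd : d ∈ S) : coeff (φ d) (f p) = coeff d p := by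
  classical
  conv_lhs => rw [p.as_sum, map_sum]
  simp only [hf, coeff_sum, coeff_monomial]
  rw [Finset.sum_congr rfl fun m hm => if_congr (hφ.eq_iff (hp hm) hd) rfl rfl,
    Finset.sum_ite_eq', ite_eq_left_iff, notMem_support_iff]
  exact Eq.symm

theorem exists_degreeOf_lt_sub_mem_span [Nontrivial R] [DecidableEq σ] (i : σ) {n : ℕ}
    (hn : n ≠ 0) {h : MvPolynomial σ R} (hh : degreeOf i h = 0) (p : MvPolynomial σ R) :
    ∃ r, degreeOf i r < n ∧ p - r ∈ Ideal.span {X i ^ n - h} := by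
  let e := (renameEquiv R (Equiv.optionSubtypeNe i).symm).trans (optionEquivLeft R {b // b ≠ i})
  have hdeg (f : MvPolynomial σ R) : degreeOf i f = (e f).natDegree := degreeOf_eq_natDegree i f
  have he : e (X i ^ n - h) = Polynomial.X ^ n - Polynomial.C ((e h).coeff 0) := by
    rw [map_sub, map_pow, ← Polynomial.eq_C_of_natDegree_eq_zero ((hdeg h).symm.trans hh)]
    simp [e, Equiv.optionSubtypeNe_symm_apply, optionEquivLeft_X_none]
  set q := e (X i ^ n - h)
  have hmonic : q.Monic := he ▸ Polynomial.monic_X_pow_sub_C _ hn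
  have hdeg_q : q.natDegree = n := by rw [he, Polynomial.natDegree_X_pow_sub_C]
  refine ⟨e.symm (e p %ₘ q), ?_, Ideal.mem_span_singleton'.2 ⟨e.symm (e p /ₘ q), e.injective ?_⟩⟩
  · rw [hdeg, e.apply_symm_apply, ← hdeg_q]
    exact Polynomial.natDegree_modByMonic_lt _ hmonic fun hq1 => hn (by simp [← hdeg_q, hq1])
  · rw [map_sub, map_mul, e.apply_symm_apply, e.apply_symm_apply, mul_comm]
    exact eq_sub_of_add_eq' (Polynomial.modByMonic_add_div _ _)

end MvPolynomial

theorem Nat.mul_add_inj_of_lt {n a b c d : ℕ} (hc : c < n) (hd : d < n)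
    (h : n * a + c = n * b + d) : a = b ∧ c = d := by
  have hcd : c = d := by
    simpa [Nat.mul_add_mod, Nat.mod_eq_of_lt hc, Nat.mod_eq_of_lt hd] using congrArg (· % n) h
  subst hcd
  exact ⟨Nat.eq_of_mul_eq_mul_left (c.zero_le.trans_lt hc) (Nat.add_right_cancel h), rfl⟩

noncomputable def kleinianExponent (n : ℕ) (m : Fin 3 →₀ ℕ) : Fin 2 →₀ ℕ :=
  Finsupp.single 0 (n * m 0 + m 2) + Finsupp.single 1 (n * m 1 + m 2)

theorem kleinianMap_monomial (n : ℕ) (m : Fin 3 →₀ ℕ) (a : ℂ) :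
    kleinianMap n (monomial m a) = monomial (kleinianExponent n m) a := by
  rw [kleinianExponent, ← mul_one a, ← monomial_mul]
  simp only [kleinianMap, aeval_eq_bind₁, monomial_eq, Finsupp.prod_fintype, Fin.prod_univ_three,
    map_mul, map_pow, algHom_C, algebraMap_eq, bind₁_X_right, Matrix.cons_val_zero,
    Matrix.cons_val_one, Matrix.cons_val, Finsupp.single_add, Finsupp.coe_add, Pi.add_apply,
    Fin.prod_univ_two, Finsupp.single_eq_same, ne_eq, one_ne_zero, zero_ne_one, not_false_eq_true,
    Finsupp.single_eq_of_ne, add_zero, pow_zero, implies_true, C_1, mul_one, one_mul]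
  ring

theorem injOn_kleinianExponent (n : ℕ) :
    {m : Fin 3 →₀ ℕ | m 2 < n}.InjOn (kleinianExponent n) := by
  intro m hm m' hm' h
  have h0 := Nat.mul_add_inj_of_lt hm hm'
    (by simpa [kleinianExponent] using DFunLike.congr_fun h 0)
  have h1 := Nat.mul_add_inj_of_lt hm hm'
    (by simpa [kleinianExponent] using DFunLike.congr_fun h 1)
  ext i
  fin_cases i
  exacts [h0.1, h1.1, h0.2]

theorem eq_zero_of_kleinianMap_eq_zero {n : ℕ} {p : MvPolynomial (Fin 3) ℂ} (hp : degreeOf 2 p < n)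
    (h : kleinianMap n p = 0) : p = 0 := by
  have hsupp : ↑p.support ⊆ {m : Fin 3 →₀ ℕ | m 2 < n} := fun m hm =>
    (monomial_le_degreeOf 2 hm).trans_lt hp
  ext d
  by_cases hd : d 2 < n
  · rw [coeff_zero, ← coeff_apply_eq_of_map_monomial (kleinianMap_monomial n)
      (injOn_kleinianExponent n) hsupp hd, h, coeff_zero]
  · exact notMem_support_iff.1 fun hd' => hd (hsupp hd')

theorem ker_kleinianMap {n : ℕ} (hn : n ≠ 0) :
    RingHom.ker (kleinianMap n) = Ideal.span {(X 0 : MvPolynomial (Fin 3) ℂ) * X 1 - X 2 ^ n} := by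
  have hle : Ideal.span {(X 0 : MvPolynomial (Fin 3) ℂ) * X 1 - X 2 ^ n} ≤
      RingHom.ker (kleinianMap n) := by
    rw [Ideal.span_le, Set.singleton_subset_iff, SetLike.mem_coe, RingHom.mem_ker]
    simp [kleinianMap, mul_pow]
  refine le_antisymm (fun p hp => ?_) hle
  obtain ⟨r, hr, hpr⟩ := exists_degreeOf_lt_sub_mem_span (2 : Fin 3) hn (h := X 0 * X 1)
    (by rw [degreeOf_mul_X_of_ne _ (by decide), degreeOf_X_of_ne (by decide)]) p
  rw [← Ideal.span_singleton_neg, neg_sub] at hpr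
  have hr0 : r = 0 := eq_zero_of_kleinianMap_eq_zero hr (by simpa using sub_mem hp (hle hpr))
  simpa [hr0] using hpr

/-- The kernel of `u ↦ xⁿ, v ↦ yⁿ, w ↦ xy` is the principal ideal `(uv − wⁿ)`, so it induces an
algebra isomorphism `ℂ[u,v,w]/(uv − wⁿ) ≅ ℂ[xⁿ, yⁿ, xy]`. -/
theorem stmt_2 (n : ℕ) (hn : 1 ≤ n) :
    RingHom.ker (kleinianMap n) =
      Ideal.span {(X 0 : MvPolynomial (Fin 3) ℂ) * X 1 - X 2 ^ n} ∧
    Nonempty ((MvPolynomial (Fin 3) ℂ ⧸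
        Ideal.span {(X 0 : MvPolynomial (Fin 3) ℂ) * X 1 - X 2 ^ n}) ≃ₐ[ℂ]
      (kleinianMap n).range) := by
  have hker := ker_kleinianMap (n := n) (by omega)
  exact ⟨hker,
    ⟨(Ideal.quotientEquivAlgOfEq ℂ hker).symm.trans (Ideal.quotientKerEquivRange _)⟩⟩
end

section
/- Let v ≤ w be natural numbers, V = ℂᵛ, W = ℂʷ. Let A : V → W be an injective linear map and B : W → V a linear map with B ∘ A = 0. Then the pair (U, C) := (im A, A ∘ B) satisfies: dim U = v, C(W) ⊆ U, and C(U) = 0 (hence also C² = 0). Moreover, every pair (U, C) with U ⊆ W a subspace of dimension v, C : W → W linear, C(W) ⊆ U and C(U) = 0 arises in this way: there exist an injective linear A : V → W and a linear B : W → V with B ∘ A = 0, im A = U, and A ∘ B = C. -/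
/-- For the one-vertex quiver data `(v, w)`: a pair `(A, B)` with `A` injective and `BA = 0`
yields a point `(im A, A ∘ B)` of `T*G(v, ℂʷ)`, and every point of `T*G(v, ℂʷ)` arises this
way. -/
theorem stmt_9 (v w : ℕ) (hvw : v ≤ w) :
    (∀ (A : (Fin v → ℂ) →ₗ[ℂ] (Fin w → ℂ)) (B : (Fin w → ℂ) →ₗ[ℂ] (Fin v → ℂ)),
      Function.Injective A → B ∘ₗ A = 0 →
        Module.finrank ℂ (LinearMap.range A) = v ∧
        LinearMap.range (A ∘ₗ B) ≤ LinearMap.range A ∧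
        (∀ u ∈ LinearMap.range A, (A ∘ₗ B) u = 0) ∧
        (A ∘ₗ B) ∘ₗ (A ∘ₗ B) = 0) ∧
    (∀ (U : Submodule ℂ (Fin w → ℂ)) (C : (Fin w → ℂ) →ₗ[ℂ] (Fin w → ℂ)),
      Module.finrank ℂ U = v → LinearMap.range C ≤ U → (∀ u ∈ U, C u = 0) →
        ∃ (A : (Fin v → ℂ) →ₗ[ℂ] (Fin w → ℂ)) (B : (Fin w → ℂ) →ₗ[ℂ] (Fin v → ℂ)),
          Function.Injective A ∧ B ∘ₗ A = 0 ∧ LinearMap.range A = U ∧ A ∘ₗ B = C) := by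
  constructor
  · intro A B hA hBA
    have hvanish : ∀ u ∈ LinearMap.range A, (A ∘ₗ B) u = 0 := by
      rintro _ ⟨x, rfl⟩
      have : B (A x) = 0 := by
        have := congrFun (congrArg (fun f => f.toFun) hBA) x
        simpa using this
      simp [LinearMap.comp_apply, this]
    refine ⟨?_, ?_, hvanish, ?_⟩
    · have := LinearMap.finrank_range_of_inj hA
      simpa using this
    · rintro _ ⟨x, rfl⟩
      exact ⟨B x, rfl⟩
    · apply LinearMap.ext; intro x
      have : (A ∘ₗ B) x ∈ LinearMap.range A := ⟨B x, rfl⟩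
      simpa using hvanish _ this
  · intro U C hU hrange hkill
    have hfr : Module.finrank ℂ (Fin v → ℂ) = Module.finrank ℂ U := by
      simpa using hU.symm
    let e : (Fin v → ℂ) ≃ₗ[ℂ] U := LinearEquiv.ofFinrankEq _ _ hfr
    have hCmem : ∀ x, C x ∈ U := fun x => hrange ⟨x, rfl⟩
    let A : (Fin v → ℂ) →ₗ[ℂ] (Fin w → ℂ) := U.subtype ∘ₗ e.toLinearMap
    let B : (Fin w → ℂ) →ₗ[ℂ] (Fin v → ℂ) :=
      e.symm.toLinearMap ∘ₗ C.codRestrict U hCmem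
    refine ⟨A, B, ?_, ?_, ?_, ?_⟩
    · exact Subtype.val_injective.comp e.injective
    · apply LinearMap.ext; intro x
      have h0 : C ((e x : Fin w → ℂ)) = 0 := hkill _ (e x).2
      have : C.codRestrict U hCmem ((e x : Fin w → ℂ)) = 0 := by
        apply Subtype.ext
        simpa using h0
      simp [A, B, LinearMap.comp_apply, this]
    · simp only [A, LinearMap.range_comp, LinearEquiv.range, Submodule.map_top,
        Submodule.range_subtype]
    · apply LinearMap.ext; intro x
      simp [A, B, LinearMap.comp_apply]
end

section
/- Let v ≤ w be natural numbers, V = ℂᵛ, W = ℂʷ. Suppose A, A′ : V → W are injective linear maps and B, B′ : W → V are linear maps with B ∘ A = 0 and B′ ∘ A′ = 0. Then im A = im A′ and A ∘ B = A′ ∘ B′ if and only if there exists a linear automorphism g of V with A′ = A ∘ g and B′ = g⁻¹ ∘ B. -/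
/-- Two pairs `(A, B)`, `(A′, B′)` with `A, A′` injective and `BA = 0 = B′A′` determine the
same point `(im A, A ∘ B)` of `T*G(v, ℂʷ)` iff they lie in the same `GL(V)`-orbit. -/
theorem stmt_10 (v w : ℕ) (hvw : v ≤ w)
    (A A' : (Fin v → ℂ) →ₗ[ℂ] (Fin w → ℂ)) (B B' : (Fin w → ℂ) →ₗ[ℂ] (Fin v → ℂ))
    (hA : Function.Injective A) (hA' : Function.Injective A')
    (hBA : B ∘ₗ A = 0) (hBA' : B' ∘ₗ A' = 0) :
    (LinearMap.range A = LinearMap.range A' ∧ A ∘ₗ B = A' ∘ₗ B') ↔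
      ∃ g : (Fin v → ℂ) ≃ₗ[ℂ] (Fin v → ℂ),
        A' = A ∘ₗ (g : (Fin v → ℂ) →ₗ[ℂ] (Fin v → ℂ)) ∧
        B' = (g.symm : (Fin v → ℂ) →ₗ[ℂ] (Fin v → ℂ)) ∘ₗ B := by
  constructor
  · rintro ⟨hrange, hAB⟩
    set e := LinearEquiv.ofInjective A hA with he
    set e' := LinearEquiv.ofInjective A' hA' with he'
    set g : (Fin v → ℂ) ≃ₗ[ℂ] (Fin v → ℂ) :=
      (e'.trans (LinearEquiv.ofEq _ _ hrange.symm)).trans e.symm with hgdef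
    have hg : A' = A ∘ₗ (g : (Fin v → ℂ) →ₗ[ℂ] (Fin v → ℂ)) := by
      refine LinearMap.ext fun x => ?_
      have h1 : A (e.symm (LinearEquiv.ofEq _ _ hrange.symm (e' x))) =
          ((LinearEquiv.ofEq _ _ hrange.symm (e' x)) : LinearMap.range A) :=
        congrArg Subtype.val (e.apply_symm_apply (LinearEquiv.ofEq _ _ hrange.symm (e' x)))
      simp only [LinearMap.coe_comp, Function.comp_apply, LinearEquiv.coe_coe, hgdef,
        LinearEquiv.trans_apply]
      rw [h1]
      rfl
    refine ⟨g, hg, ?_⟩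
    have h2 : B = (g : (Fin v → ℂ) →ₗ[ℂ] (Fin v → ℂ)) ∘ₗ B' := by
      refine LinearMap.ext fun x => ?_
      apply hA
      have := congrArg (fun f => f x) hAB
      simp only [LinearMap.coe_comp, Function.comp_apply] at this ⊢
      rw [this, hg]
      rfl
    refine LinearMap.ext fun x => ?_
    simp only [LinearMap.coe_comp, Function.comp_apply, LinearEquiv.coe_coe, h2]
    exact (g.symm_apply_apply (B' x)).symm
  · rintro ⟨g, hAg, hBg⟩
    constructor
    · rw [hAg]
      ext y
      constructor
      · rintro ⟨x, rfl⟩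
        exact ⟨g.symm x, by simp⟩
      · rintro ⟨x, rfl⟩
        exact ⟨g x, rfl⟩
    · rw [hAg, hBg]
      refine LinearMap.ext fun x => ?_
      simp
end
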